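/- arXiv:1010.2855 — 2 statements merged into one kernel-verified Lean document; each statement's English description precedes it below -/
import Mathlib

section
/- Lemma (reduction of the h.t.a. identities in dimension 2): Let V be a 2-dimensional real vector space with two bilinear skew-symmetric operations x·y, x*y and a trilinear operation ⟨x;y,z⟩ skew-symmetric in y,z, and let x₁, x₂ be a basis of V. Set J = x₁*⟨x₂;x₁,x₂⟩ − x₂*⟨x₁;x₁,x₂⟩. Then the identities (2)–(13) hold for all elements of V if and only if the following hold: (14) J − ⟨x₁·x₂;x₁,x₂⟩ + x₁·⟨x₂;x₁,x₂⟩ − x₂·⟨x₁;x₁,x₂⟩ = 0; (15) xᵢ·J − ⟨xᵢ;x₁,⟨x₂;x₁,x₂⟩⟩ + ⟨xᵢ;x₂,⟨x₁;x₁,x₂⟩⟩ = 0 for i = 1,2; (16) xᵢ*J = 0 for i = 1,2; (17) ⟨xⱼ;xᵢ,J⟩ = 0 for i,j = 1,2; (18) ⟨x₁·x₂;x₁,x₂⟩ − x₁·⟨x₂;x₁,x₂⟩ + x₂·⟨x₁;x₁,x₂⟩ = 0; (19) J = 0. -/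
/-- A (binary-binary-ternary) triple algebra: a real vector space with two
bilinear skew-symmetric binary operations `mul` (x·y), `star` (x*y) and a
trilinear operation `tri` (⟨x;y,z⟩) skew-symmetric in its last two arguments. -/
structure TripleAlg (V : Type*) [AddCommGroup V] [Module ℝ V] where
  mul : V → V → V
  star : V → V → V
  tri : V → V → V → V
  mul_add_left : ∀ x y z : V, mul (x + y) z = mul x z + mul y z
  mul_smul_left : ∀ (r : ℝ) (x y : V), mul (r • x) y = r • mul x y
  mul_skew : ∀ x y : V, mul x y = -mul y x
  star_add_left : ∀ x y z : V, star (x + y) z = star x z + star y z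
  star_smul_left : ∀ (r : ℝ) (x y : V), star (r • x) y = r • star x y
  star_skew : ∀ x y : V, star x y = -star y x
  tri_add_fst : ∀ x y z w : V, tri (x + y) z w = tri x z w + tri y z w
  tri_smul_fst : ∀ (r : ℝ) (x z w : V), tri (r • x) z w = r • tri x z w
  tri_add_snd : ∀ x y z w : V, tri x (y + z) w = tri x y w + tri x z w
  tri_smul_snd : ∀ (r : ℝ) (x y w : V), tri x (r • y) w = r • tri x y w
  tri_skew : ∀ x y z : V, tri x y z = -tri x z y

namespace TripleAlg

variable {V : Type*} [AddCommGroup V] [Module ℝ V]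

/-- The summand of identity (11), to be summed cyclically over the pairs
(ξ,η), (ζ,κ), (l,m). -/
def term11 (A : TripleAlg V) (ξ η ζ κ l m : V) : V :=
  A.tri (A.tri (A.mul ξ η) ζ κ + A.mul η (A.tri ξ ζ κ) - A.mul ξ (A.tri η ζ κ)) l m
    + A.tri (A.mul l m) (A.tri η ζ κ) ξ + A.mul m (A.tri l (A.tri η ζ κ) ξ)
    - A.mul l (A.tri m (A.tri η ζ κ) ξ)
    - (A.tri (A.mul l m) (A.tri ξ ζ κ) η + A.mul m (A.tri l (A.tri ξ ζ κ) η)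
        - A.mul l (A.tri m (A.tri ξ ζ κ) η))

/-- The summand of identity (12). -/
def term12 (A : TripleAlg V) (ξ η ζ κ l m : V) : V :=
  A.star (A.tri m (A.tri η ζ κ) ξ - A.tri m (A.tri ξ ζ κ) η) l
    + A.star (A.tri l (A.tri ξ ζ κ) η - A.tri l (A.tri η ζ κ) ξ) m

/-- The summand of identity (13). -/
def term13 (A : TripleAlg V) (θ ξ η ζ κ l m : V) : V :=
  A.tri θ (A.tri m (A.tri η ζ κ) ξ - A.tri m (A.tri ξ ζ κ) η) l
    + A.tri θ (A.tri l (A.tri ξ ζ κ) η - A.tri l (A.tri η ζ κ) ξ) m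

/-- The defining identities (2)–(13) of an (abstract) hyporeductive triple
algebra. -/
def IsHTA (A : TripleAlg V) : Prop :=
  -- (2)
  (∀ ξ η ζ : V,
    A.mul ξ (A.mul η ζ) - A.tri ξ η ζ + A.mul η (A.mul ζ ξ) - A.tri η ζ ξ
      + A.mul ζ (A.mul ξ η) - A.tri ζ ξ η = 0) ∧
  -- (3)
  (∀ ξ η ζ : V,
    A.star ζ (A.mul ξ η) + A.star ξ (A.mul η ζ) + A.star η (A.mul ζ ξ) = 0) ∧
  -- (4)
  (∀ θ ξ η ζ : V,
    A.tri θ ζ (A.mul ξ η) + A.tri θ ξ (A.mul η ζ) + A.tri θ η (A.mul ζ ξ) = 0) ∧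
  -- (5)
  (∀ ξ η ζ κ : V,
    A.mul κ (A.tri ζ ξ η) - A.mul ζ (A.tri κ ξ η) + A.tri (A.mul ζ κ) ξ η =
      A.tri (A.star ξ η) ζ κ - A.tri (A.star ζ κ) ξ η
        + A.star ζ (A.tri κ ξ η) - A.star κ (A.tri ζ ξ η)
        + A.star (A.star ξ η) (A.star ζ κ) + A.mul (A.star ξ η) (A.star ζ κ)) ∧
  -- (6)
  (∀ ξ η ζ κ χ : V,
    A.mul χ (A.mul κ (A.tri ζ ξ η) - A.mul ζ (A.tri κ ξ η) + A.tri (A.mul ζ κ) ξ η)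
      + A.tri (A.tri χ ξ η) ζ κ - A.tri (A.tri χ ζ κ) ξ η
      + A.tri χ ζ (A.tri κ ξ η) - A.tri χ κ (A.tri ζ ξ η) = 0) ∧
  -- (7)
  (∀ ξ η ζ κ χ : V,
    A.star χ (A.mul κ (A.tri ζ ξ η) - A.mul ζ (A.tri κ ξ η) + A.tri (A.mul ζ κ) ξ η) = 0) ∧
  -- (8)
  (∀ ξ η ζ κ θ χ : V,
    A.tri θ χ (A.mul κ (A.tri ζ ξ η) - A.mul ζ (A.tri κ ξ η) + A.tri (A.mul ζ κ) ξ η) = 0) ∧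
  -- (9)
  (∀ ξ η ζ κ : V,
    A.mul κ (A.tri ζ ξ η) - A.mul ζ (A.tri κ ξ η) + A.tri (A.mul ζ κ) ξ η
      + A.mul η (A.tri ξ ζ κ) - A.mul ξ (A.tri η ζ κ) + A.tri (A.mul ξ η) ζ κ = 0) ∧
  -- (10)
  (∀ ξ η ζ κ : V,
    A.star ζ (A.tri κ ξ η) - A.star κ (A.tri ζ ξ η)
      + A.star ξ (A.tri η ζ κ) - A.star η (A.tri ξ ζ κ) = 0) ∧
  -- (11)
  (∀ ξ η ζ κ l m : V,
    A.term11 ξ η ζ κ l m + A.term11 ζ κ l m ξ η + A.term11 l m ξ η ζ κ = 0) ∧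
  -- (12)
  (∀ ξ η ζ κ l m : V,
    A.term12 ξ η ζ κ l m + A.term12 ζ κ l m ξ η + A.term12 l m ξ η ζ κ = 0) ∧
  -- (13)
  (∀ θ ξ η ζ κ l m : V,
    A.term13 θ ξ η ζ κ l m + A.term13 θ ζ κ l m ξ η + A.term13 θ l m ξ η ζ κ = 0)

/-- The expression J(u,v) = u*⟨v;u,v⟩ − v*⟨u;u,v⟩. -/
def J (A : TripleAlg V) (u v : V) : V :=
  A.star u (A.tri v u v) - A.star v (A.tri u u v)

end TripleAlg

/-! ### Auxiliary machinery for the 2-dimensional reduction -/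

namespace TripleAlgAux

variable {V : Type*} [AddCommGroup V] [Module ℝ V]

lemma double_zero' {W : Type*} [AddCommGroup W] [Module ℝ W] (a : W) (h : a + a = 0) :
    a = 0 := by
  have h2 : (2:ℝ) • a = 0 := by rw [two_smul]; exact h
  have h3 := congrArg (fun x : W => ((2:ℝ)⁻¹) • x) h2
  simpa [smul_smul] using h3

noncomputable def dd (B : Module.Basis (Fin 2) ℝ V) (u v : V) : ℝ :=
  B.repr u 0 * B.repr v 1 - B.repr u 1 * B.repr v 0

variable (B : Module.Basis (Fin 2) ℝ V)

lemma dd_add_left (u v w : V) : dd B (u + v) w = dd B u w + dd B v w := by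
  simp [dd]; ring
lemma dd_add_right (u v w : V) : dd B u (v + w) = dd B u v + dd B u w := by
  simp [dd]; ring
lemma dd_smul_left (r : ℝ) (u v : V) : dd B (r • u) v = r * dd B u v := by
  simp [dd]; ring
lemma dd_smul_right (r : ℝ) (u v : V) : dd B u (r • v) = r * dd B u v := by
  simp [dd]; ring
lemma dd_neg_left (u v : V) : dd B (-u) v = -dd B u v := by
  simp [dd]; ring
lemma dd_neg_right (u v : V) : dd B u (-v) = -dd B u v := by
  simp [dd]; ring
lemma dd_sub_left (u v w : V) : dd B (u - v) w = dd B u w - dd B v w := by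
  simp [dd]; ring
lemma dd_sub_right (u v w : V) : dd B u (v - w) = dd B u v - dd B u w := by
  simp [dd]; ring
lemma dd_zero_left (v : V) : dd B 0 v = 0 := by simp [dd]
lemma dd_zero_right (v : V) : dd B v 0 = 0 := by simp [dd]
lemma dd_self (v : V) : dd B v v = 0 := by simp [dd]; ring
lemma dd_comm (u v : V) : dd B u v = -dd B v u := by simp [dd]; ring
lemma dd_basis : dd B (B 0) (B 1) = 1 := by
  simp [dd, Module.Basis.repr_self]

lemma pluecker (u v w z : V) :
    dd B v w * dd B u z + dd B w u * dd B v z + dd B u v * dd B w z = 0 := by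
  simp only [dd]; ring

lemma cramer (u v w : V) : dd B v w • u + dd B w u • v + dd B u v • w = 0 := by
  refine B.ext_elem fun i => ?_
  fin_cases i <;>
    simp [dd, map_add, map_smul] <;> ring

lemma skew_red {W : Type*} [AddCommGroup W] [Module ℝ W]
    (f : V → V → W)
    (hadd : ∀ x y z, f (x + y) z = f x z + f y z)
    (hsmul : ∀ (r : ℝ) (x y : V), f (r • x) y = r • f x y)
    (hskew : ∀ x y, f x y = -f y x) (u v : V) :
    f u v = dd B u v • f (B 0) (B 1) := by
  have haddr : ∀ x y z, f x (y + z) = f x y + f x z := by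
    intro x y z
    rw [hskew, hadd, hskew y x, hskew z x]; abel
  have hsmulr : ∀ (r : ℝ) (x y : V), f x (r • y) = r • f x y := by
    intro r x y
    rw [hskew, hsmul, hskew y x, smul_neg, neg_neg]
  have hxx : ∀ x, f x x = 0 := by
    intro x
    refine double_zero' _ ?_
    nth_rewrite 2 [hskew]
    exact add_neg_cancel _
  conv_lhs => rw [← B.sum_repr u, ← B.sum_repr v]
  rw [Fin.sum_univ_two, Fin.sum_univ_two]
  simp only [hadd, haddr, hsmul, hsmulr, hxx, smul_zero, zero_add, add_zero]
  rw [hskew (B 1) (B 0)]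
  simp only [dd]
  module

end TripleAlgAux

namespace TripleAlg

variable {V : Type*} [AddCommGroup V] [Module ℝ V] (A : TripleAlg V)

lemma mul_zero_left (x : V) : A.mul 0 x = 0 := by
  have := A.mul_smul_left 0 0 x; simpa using this
lemma mul_zero_right (x : V) : A.mul x 0 = 0 := by
  rw [A.mul_skew, A.mul_zero_left, neg_zero]
lemma star_zero_left (x : V) : A.star 0 x = 0 := by
  have := A.star_smul_left 0 0 x; simpa using this
lemma star_zero_right (x : V) : A.star x 0 = 0 := by
  rw [A.star_skew, A.star_zero_left, neg_zero]
lemma tri_zero_snd (x w : V) : A.tri x 0 w = 0 := by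
  have := A.tri_smul_snd 0 x 0 w; simpa using this
lemma tri_zero_thd (x y : V) : A.tri x y 0 = 0 := by
  rw [A.tri_skew, A.tri_zero_snd, neg_zero]

/-- The linear map `u ↦ ⟨u; x₁, x₂⟩`. -/
noncomputable def tL (A : TripleAlg V) (B : Module.Basis (Fin 2) ℝ V) : V →ₗ[ℝ] V where
  toFun u := A.tri u (B 0) (B 1)
  map_add' x y := A.tri_add_fst x y (B 0) (B 1)
  map_smul' r x := A.tri_smul_fst r x (B 0) (B 1)

end TripleAlg

open TripleAlgAux in
/-- Lemma: in dimension 2, with basis x₁ = B 0, x₂ = B 1 and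
J = x₁*⟨x₂;x₁,x₂⟩ − x₂*⟨x₁;x₁,x₂⟩, the h.t.a. identities (2)–(13) are
equivalent to the identities (14)–(19). -/
theorem two_dim_hta_iff {V : Type*} [AddCommGroup V] [Module ℝ V]
    (hdim : Module.finrank ℝ V = 2) (A : TripleAlg V) (B : Module.Basis (Fin 2) ℝ V) :
    A.IsHTA ↔
      -- (14)
      ((A.J (B 0) (B 1) - A.tri (A.mul (B 0) (B 1)) (B 0) (B 1)
          + A.mul (B 0) (A.tri (B 1) (B 0) (B 1))
          - A.mul (B 1) (A.tri (B 0) (B 0) (B 1)) = 0) ∧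
      -- (15)
      (∀ i : Fin 2,
        A.mul (B i) (A.J (B 0) (B 1))
          - A.tri (B i) (B 0) (A.tri (B 1) (B 0) (B 1))
          + A.tri (B i) (B 1) (A.tri (B 0) (B 0) (B 1)) = 0) ∧
      -- (16)
      (∀ i : Fin 2, A.star (B i) (A.J (B 0) (B 1)) = 0) ∧
      -- (17)
      (∀ i j : Fin 2, A.tri (B j) (B i) (A.J (B 0) (B 1)) = 0) ∧
      -- (18)
      (A.tri (A.mul (B 0) (B 1)) (B 0) (B 1)
        - A.mul (B 0) (A.tri (B 1) (B 0) (B 1))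
        + A.mul (B 1) (A.tri (B 0) (B 0) (B 1)) = 0) ∧
      -- (19)
      (A.J (B 0) (B 1) = 0)) := by
  constructor
  · rintro ⟨h2, h3, h4, h5, h6, h7, h8, h9, h10, h11, h12, h13⟩
    have hE : A.mul (B 1) (A.tri (B 0) (B 0) (B 1)) - A.mul (B 0) (A.tri (B 1) (B 0) (B 1))
        + A.tri (A.mul (B 0) (B 1)) (B 0) (B 1) = 0 := by
      refine TripleAlgAux.double_zero' _ ?_
      rw [← h9 (B 0) (B 1) (B 0) (B 1)]
      abel
    have hJ0 : A.J (B 0) (B 1) = 0 := by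
      refine TripleAlgAux.double_zero' _ ?_
      simp only [TripleAlg.J]
      rw [← h10 (B 0) (B 1) (B 0) (B 1)]
      abel
    refine ⟨?_, ?_, ?_, ?_, ?_, hJ0⟩
    · rw [hJ0]
      linear_combination (norm := module) -hE
    · intro i
      have h := h6 (B 0) (B 1) (B 0) (B 1) (B i)
      rw [hE, A.mul_zero_right] at h
      rw [hJ0, A.mul_zero_right]
      linear_combination (norm := module) -h
    · intro i
      rw [hJ0]; exact A.star_zero_right _
    · intro i j
      rw [hJ0]; exact A.tri_zero_thd _ _
    · linear_combination (norm := module) hE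
  · rintro ⟨h14, h15, h16, h17, h18, h19⟩
    obtain ⟨mm, hmm⟩ : ∃ m, A.mul (B 0) (B 1) = m := ⟨_, rfl⟩
    obtain ⟨ss, hss⟩ : ∃ s, A.star (B 0) (B 1) = s := ⟨_, rfl⟩
    have hmul : ∀ u v, A.mul u v = dd B u v • mm := fun u v => by
      rw [skew_red B A.mul A.mul_add_left A.mul_smul_left A.mul_skew u v, hmm]
    have hstar : ∀ u v, A.star u v = dd B u v • ss := fun u v => by
      rw [skew_red B A.star A.star_add_left A.star_smul_left A.star_skew u v, hss]
    have htri : ∀ u v w, A.tri u v w = dd B v w • A.tL B u := fun u v w => by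
      rw [skew_red B (A.tri u) (A.tri_add_snd u) (fun r x y => A.tri_smul_snd r u x y) (A.tri_skew u) v w]
      rfl
    -- reduce the hypotheses
    have hjt : ∀ i : Fin 2,
        (dd B (B 0) (A.tL B (B 1)) - dd B (B 1) (A.tL B (B 0))) • A.tL B (B i) = 0 := by
      intro i
      have h := h15 i
      rw [h19, A.mul_zero_right] at h
      simp only [htri, dd_basis, one_smul, dd_smul_right, smul_smul] at h
      linear_combination (norm := module) -h
    have hj0 : dd B (B 0) (A.tL B (B 1)) - dd B (B 1) (A.tL B (B 0)) = 0 := by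
      by_contra hne
      have hz : ∀ i : Fin 2, A.tL B (B i) = 0 := by
        intro i
        have h := congrArg (fun x =>
          (dd B (B 0) (A.tL B (B 1)) - dd B (B 1) (A.tL B (B 0)))⁻¹ • x) (hjt i)
        simpa [smul_smul, inv_mul_cancel₀ hne] using h
      exact hne (by rw [hz 0, hz 1, dd_zero_right, dd_zero_right, sub_zero])
    have hg1 : ∀ a b : V, dd B b (A.tL B a) = dd B a (A.tL B b) := by
      intro a b
      have h := skew_red B (fun x y => dd B y (A.tL B x) - dd B x (A.tL B y))
        (fun x y z => by simp only [map_add, dd_add_left, dd_add_right]; ring)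
        (fun r x y => by
          simp only [map_smul, dd_smul_left, dd_smul_right, smul_eq_mul]; ring)
        (fun x y => by ring) a b
      simp only [smul_eq_mul] at h
      linear_combination h - dd B a b * hj0
    have hg2 : ∀ a b : V, dd B (A.tL B a) b = dd B (A.tL B b) a := by
      intro a b
      rw [dd_comm B (A.tL B a) b, dd_comm B (A.tL B b) a, hg1 a b]
    have htm : A.tL B mm = 0 := by
      have h := h18
      simp only [htri, hmul, dd_basis, one_smul] at h
      linear_combination (norm := module) h + hj0 • mm
    refine ⟨?_, ?_, ?_, ?_, ?_, ?_, ?_, ?_, ?_, ?_, ?_, ?_⟩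
    · -- (2)
      intro ξ η ζ
      have hct := congrArg (A.tL B) (cramer B ξ η ζ)
      rw [map_zero] at hct
      simp only [map_add, map_smul] at hct
      simp only [htri, hmul, dd_smul_right, dd_smul_left, smul_smul]
      linear_combination (norm := module) (pluecker B ξ η ζ mm) • mm - hct
    · -- (3)
      intro ξ η ζ
      simp only [htri, hmul, hstar, dd_smul_right, smul_smul]
      linear_combination (norm := module) (pluecker B ξ η ζ mm) • ss
    · -- (4)
      intro θ ξ η ζ
      simp only [htri, hmul, hstar, dd_smul_right, smul_smul]
      linear_combination (norm := module) (pluecker B ξ η ζ mm) • (A.tL B θ)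
    · -- (5)
      intro ξ η ζ κ
      simp only [htri, hmul, hstar, htm, dd_smul_right, dd_smul_left, smul_smul,
        map_smul, smul_zero, dd_zero_right, dd_self, add_zero, zero_smul, mul_zero]
      match_scalars <;> first
        | ring1
        | linear_combination dd B ξ η * hg1 ζ κ
    · -- (6)
      intro ξ η ζ κ χ
      simp only [htri, hmul, hstar, htm, dd_smul_right, dd_smul_left, smul_smul,
        map_smul, map_add, map_sub, smul_zero, dd_zero_right, dd_self, add_zero,
        zero_smul, mul_zero, dd_add_right, dd_sub_right, smul_add, smul_sub]
      match_scalars <;> first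
        | ring1
        | linear_combination (dd B ξ η * dd B χ mm) * hg1 ζ κ
        | linear_combination (-(dd B ξ η)) * hg1 ζ κ
        | linear_combination dd B ξ η * hg1 ζ κ
    · -- (7)
      intro ξ η ζ κ χ
      simp only [htri, hmul, hstar, htm, dd_smul_right, dd_smul_left, smul_smul,
        map_smul, map_add, map_sub, smul_zero, dd_zero_right, dd_self, add_zero,
        zero_smul, mul_zero, dd_add_right, dd_sub_right, smul_add, smul_sub]
      match_scalars <;> first
        | ring1
        | linear_combination (dd B ξ η * dd B χ mm) * hg1 ζ κ
    · -- (8)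
      intro ξ η ζ κ θ χ
      simp only [htri, hmul, hstar, htm, dd_smul_right, dd_smul_left, smul_smul,
        map_smul, map_add, map_sub, smul_zero, dd_zero_right, dd_self, add_zero,
        zero_smul, mul_zero, dd_add_right, dd_sub_right, smul_add, smul_sub]
      match_scalars <;> first
        | ring1
        | linear_combination (dd B ξ η * dd B χ mm) * hg1 ζ κ
    · -- (9)
      intro ξ η ζ κ
      simp only [htri, hmul, hstar, htm, dd_smul_right, dd_smul_left, smul_smul,
        map_smul, smul_zero, zero_smul, mul_zero, add_zero]
      match_scalars <;> first
        | ring1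
        | linear_combination dd B ξ η * hg1 ζ κ + dd B ζ κ * hg1 ξ η
    · -- (10)
      intro ξ η ζ κ
      simp only [htri, hmul, hstar, htm, dd_smul_right, dd_smul_left, smul_smul,
        map_smul, smul_zero, zero_smul, mul_zero, add_zero]
      match_scalars <;> first
        | ring1
        | linear_combination (-(dd B ξ η)) * hg1 ζ κ - dd B ζ κ * hg1 ξ η
    · -- (11)
      intro ξ η ζ κ l m
      simp only [TripleAlg.term11, htri, hmul, hstar, htm, dd_smul_right, dd_smul_left,
        smul_smul, map_smul, map_add, map_sub, map_zero, smul_zero, dd_zero_right, dd_self,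
        add_zero, zero_smul, mul_zero, dd_add_right, dd_sub_right, dd_add_left,
        dd_sub_left, smul_add, smul_sub]
      match_scalars <;> first
        | ring1
        | linear_combination (dd B ζ κ * (dd B m ((A.tL B) l) - dd B l ((A.tL B) m))) * hg2 η ξ
            + (dd B l m * (dd B η ((A.tL B) ξ) - dd B ξ ((A.tL B) η))) * hg2 κ ζ
            + (dd B ξ η * (dd B κ ((A.tL B) ζ) - dd B ζ ((A.tL B) κ))) * hg2 m l
    · -- (12)
      intro ξ η ζ κ l m
      simp only [TripleAlg.term12, htri, hmul, hstar, htm, dd_smul_right, dd_smul_left,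
        smul_smul, map_smul, map_add, map_sub, map_zero, smul_zero, dd_zero_right, dd_self,
        add_zero, zero_smul, mul_zero, dd_add_right, dd_sub_right, dd_add_left,
        dd_sub_left, smul_add, smul_sub]
      match_scalars <;> first
        | ring1
        | linear_combination (dd B ζ κ * (dd B ((A.tL B) m) l - dd B ((A.tL B) l) m)) * hg2 η ξ
            + (dd B l m * (dd B ((A.tL B) η) ξ - dd B ((A.tL B) ξ) η)) * hg2 κ ζ
            + (dd B ξ η * (dd B ((A.tL B) κ) ζ - dd B ((A.tL B) ζ) κ)) * hg2 m l
    · -- (13)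
      intro θ ξ η ζ κ l m
      simp only [TripleAlg.term13, htri, hmul, hstar, htm, dd_smul_right, dd_smul_left,
        smul_smul, map_smul, map_add, map_sub, map_zero, smul_zero, dd_zero_right, dd_self,
        add_zero, zero_smul, mul_zero, dd_add_right, dd_sub_right, dd_add_left,
        dd_sub_left, smul_add, smul_sub]
      match_scalars <;> first
        | ring1
        | linear_combination (dd B ζ κ * (dd B ((A.tL B) m) l - dd B ((A.tL B) l) m)) * hg2 η ξ
            + (dd B l m * (dd B ((A.tL B) η) ξ - dd B ((A.tL B) ξ) η)) * hg2 κ ζ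
            + (dd B ξ η * (dd B ((A.tL B) κ) ζ - dd B ((A.tL B) ζ) κ)) * hg2 m l
end

section
/- Type (II) algebras are Lie triple algebras: Let a, k be real numbers with a ≠ 0. On V = ℝ² with standard basis u = (1,0), v = (0,1), let · be the unique bilinear skew-symmetric operation with u·v = a·u, and let ⟨;,⟩ be the unique trilinear operation skew-symmetric in its last two arguments with ⟨u;u,v⟩ = 0 and ⟨v;u,v⟩ = k·u. Then (V, ·, ⟨;,⟩) satisfies the Lie triple algebra identities, i.e. for all ξ,η,ζ,κ,χ,θ ∈ V (σ = cyclic sum over ξ,η,ζ): σ{ξ·(η·ζ) − ⟨ξ;η,ζ⟩} = 0; σ{⟨θ;ζ,ξ·η⟩} = 0; κ·⟨ζ;ξ,η⟩ − ζ·⟨κ;ξ,η⟩ + ⟨ζ·κ;ξ,η⟩ = 0; ⟨⟨χ;ξ,η⟩;ζ,κ⟩ − ⟨⟨χ;ζ,κ⟩;ξ,η⟩ + ⟨χ;ζ,⟨κ;ξ,η⟩⟩ − ⟨χ;κ,⟨ζ;ξ,η⟩⟩ = 0. -/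
/-- A binary-ternary algebra: a real vector space with a bilinear
skew-symmetric binary operation `mul` (x·y) and a trilinear operation `tri`
(⟨x;y,z⟩) skew-symmetric in its last two arguments. -/
structure BinTriAlg (V : Type*) [AddCommGroup V] [Module ℝ V] where
  mul : V → V → V
  tri : V → V → V → V
  mul_add_left : ∀ x y z : V, mul (x + y) z = mul x z + mul y z
  mul_smul_left : ∀ (r : ℝ) (x y : V), mul (r • x) y = r • mul x y
  mul_skew : ∀ x y : V, mul x y = -mul y x
  tri_add_fst : ∀ x y z w : V, tri (x + y) z w = tri x z w + tri y z w
  tri_smul_fst : ∀ (r : ℝ) (x z w : V), tri (r • x) z w = r • tri x z w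
  tri_add_snd : ∀ x y z w : V, tri x (y + z) w = tri x y w + tri x z w
  tri_smul_snd : ∀ (r : ℝ) (x y w : V), tri x (r • y) w = r • tri x y w
  tri_skew : ∀ x y z : V, tri x y z = -tri x z y

namespace BinTriAlg

variable {V : Type*} [AddCommGroup V] [Module ℝ V]

/-- The defining identities of a Lie triple algebra (generalized Lie triple
system). -/
def IsLieTripleAlg (A : BinTriAlg V) : Prop :=
  (∀ ξ η ζ : V,
    A.mul ξ (A.mul η ζ) - A.tri ξ η ζ + A.mul η (A.mul ζ ξ) - A.tri η ζ ξ
      + A.mul ζ (A.mul ξ η) - A.tri ζ ξ η = 0) ∧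
  (∀ θ ξ η ζ : V,
    A.tri θ ζ (A.mul ξ η) + A.tri θ ξ (A.mul η ζ) + A.tri θ η (A.mul ζ ξ) = 0) ∧
  (∀ ξ η ζ κ : V,
    A.mul κ (A.tri ζ ξ η) - A.mul ζ (A.tri κ ξ η) + A.tri (A.mul ζ κ) ξ η = 0) ∧
  (∀ ξ η ζ κ χ : V,
    A.tri (A.tri χ ξ η) ζ κ - A.tri (A.tri χ ζ κ) ξ η
      + A.tri χ ζ (A.tri κ ξ η) - A.tri χ κ (A.tri ζ ξ η) = 0)

end BinTriAlg

section Aux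

variable {V : Type*} [AddCommGroup V] [Module ℝ V] (A : BinTriAlg V)

lemma BTA_self_neg {x : V} (h : x = -x) : x = 0 := by
  have h2 : (2:ℝ) • x = 0 := by rw [two_smul]; nth_rewrite 1 [h]; abel
  rcases smul_eq_zero.mp h2 with h' | h'
  · norm_num at h'
  · exact h'

lemma BTA_mul_self (x : V) : A.mul x x = 0 :=
  BTA_self_neg (A.mul_skew x x)

lemma BTA_tri_self (x y : V) : A.tri x y y = 0 :=
  BTA_self_neg (A.tri_skew x y y)

lemma BTA_mul_add_right (x y z : V) : A.mul x (y + z) = A.mul x y + A.mul x z := by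
  rw [A.mul_skew, A.mul_add_left, A.mul_skew y x, A.mul_skew z x]; abel

lemma BTA_mul_smul_right (r : ℝ) (x y : V) : A.mul x (r • y) = r • A.mul x y := by
  rw [A.mul_skew, A.mul_smul_left, A.mul_skew y x, smul_neg, neg_neg]

lemma BTA_tri_add_trd (x y z w : V) : A.tri x y (z + w) = A.tri x y z + A.tri x y w := by
  rw [A.tri_skew, A.tri_add_snd, A.tri_skew x z y, A.tri_skew x w y]; abel

lemma BTA_tri_smul_trd (r : ℝ) (x y z : V) : A.tri x y (r • z) = r • A.tri x y z := by
  rw [A.tri_skew, A.tri_smul_snd, A.tri_skew x z y, smul_neg, neg_neg]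

end Aux

section Formulas

variable (a k : ℝ) (A : BinTriAlg (ℝ × ℝ))

lemma BTA_decomp (p : ℝ × ℝ) :
    p = p.1 • ((1:ℝ), (0:ℝ)) + p.2 • ((0:ℝ), (1:ℝ)) := by
  ext <;> simp

lemma BTA_mul_formula
    (hmul : A.mul ((1 : ℝ), (0 : ℝ)) ((0 : ℝ), (1 : ℝ)) = a • ((1 : ℝ), (0 : ℝ)))
    (p q : ℝ × ℝ) :
    A.mul p q = ((p.1 * q.2 - p.2 * q.1) * a) • ((1:ℝ), (0:ℝ)) := by
  have hvu : A.mul ((0:ℝ), (1:ℝ)) ((1:ℝ), (0:ℝ)) = -(a • ((1:ℝ), (0:ℝ))) := by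
    rw [A.mul_skew, hmul]
  conv_lhs => rw [BTA_decomp p, BTA_decomp q]
  rw [A.mul_add_left, A.mul_smul_left, A.mul_smul_left,
    BTA_mul_add_right, BTA_mul_add_right, BTA_mul_smul_right, BTA_mul_smul_right,
    BTA_mul_smul_right, BTA_mul_smul_right, BTA_mul_self, BTA_mul_self, hmul, hvu]
  ext <;> simp <;> ring

lemma BTA_tri_formula
    (htu : A.tri ((1 : ℝ), (0 : ℝ)) ((1 : ℝ), (0 : ℝ)) ((0 : ℝ), (1 : ℝ)) = 0)
    (htv : A.tri ((0 : ℝ), (1 : ℝ)) ((1 : ℝ), (0 : ℝ)) ((0 : ℝ), (1 : ℝ))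
      = k • ((1 : ℝ), (0 : ℝ)))
    (p q r : ℝ × ℝ) :
    A.tri p q r = ((q.1 * r.2 - q.2 * r.1) * p.2 * k) • ((1:ℝ), (0:ℝ)) := by
  have huv : ∀ w : ℝ × ℝ, A.tri w ((1:ℝ),(0:ℝ)) ((0:ℝ),(1:ℝ))
      = (w.2 * k) • ((1:ℝ), (0:ℝ)) := by
    intro w
    conv_lhs => rw [BTA_decomp w]
    rw [A.tri_add_fst, A.tri_smul_fst, A.tri_smul_fst, htu, htv]
    ext <;> simp <;> ring
  have hvu : ∀ w : ℝ × ℝ, A.tri w ((0:ℝ),(1:ℝ)) ((1:ℝ),(0:ℝ))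
      = -((w.2 * k) • ((1:ℝ), (0:ℝ))) := by
    intro w; rw [A.tri_skew, huv]
  conv_lhs => rw [BTA_decomp q, BTA_decomp r]
  rw [A.tri_add_snd, A.tri_smul_snd, A.tri_smul_snd,
    BTA_tri_add_trd, BTA_tri_add_trd, BTA_tri_smul_trd, BTA_tri_smul_trd,
    BTA_tri_smul_trd, BTA_tri_smul_trd, BTA_tri_self, BTA_tri_self, huv, hvu]
  ext <;> simp <;> ring

end Formulas

/-- Type (II) algebras are Lie triple algebras: on ℝ² with u = (1,0),
v = (0,1), the operations determined by u·v = a•u (a ≠ 0), ⟨u;u,v⟩ = 0,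
⟨v;u,v⟩ = k•u satisfy the Lie triple algebra identities. -/
theorem typeII_isLieTripleAlg (a k : ℝ) (ha : a ≠ 0) (A : BinTriAlg (ℝ × ℝ))
    (hmul : A.mul ((1 : ℝ), (0 : ℝ)) ((0 : ℝ), (1 : ℝ)) = a • ((1 : ℝ), (0 : ℝ)))
    (htu : A.tri ((1 : ℝ), (0 : ℝ)) ((1 : ℝ), (0 : ℝ)) ((0 : ℝ), (1 : ℝ)) = 0)
    (htv : A.tri ((0 : ℝ), (1 : ℝ)) ((1 : ℝ), (0 : ℝ)) ((0 : ℝ), (1 : ℝ))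
      = k • ((1 : ℝ), (0 : ℝ))) :
    A.IsLieTripleAlg := by
  have M := BTA_mul_formula a A hmul
  have T := BTA_tri_formula k A htu htv
  refine ⟨?_, ?_, ?_, ?_⟩ <;> intros <;>
    simp only [M, T, Prod.smul_mk, smul_eq_mul, Prod.ext_iff, Prod.fst_add,
      Prod.snd_add, Prod.fst_sub, Prod.snd_sub, Prod.fst_zero, Prod.snd_zero] <;>
    constructor <;> ring
end
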